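/- (Low-rank approximation with insufficient channels) Let X ∈ ℝ^{n×p} and suppose rank H_{d|p}(X) = r. Let Φ ∈ ℝ^{n×n} be orthonormal. Then for any m with r ≤ m < pd there exist Ψ ∈ ℝ^{pd×2m} and Ψ̃ ∈ ℝ^{pd×2m} such that X = H_{d|p}^†( Φ ρ(Φᵀ H_{d|p}(X) Ψ) Ψ̃ᵀ ). -/

import Mathlib

open Matrix BigOperators Finset

noncomputable section

/-- Zero-padding of a length-`d` filter to a signal on `ZMod n`. -/
def zpad {n d : ℕ} [NeZero n] (ψ : Fin d → ℝ) : ZMod n → ℝ :=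
  fun k => if h : (ZMod.val k) < d then ψ ⟨ZMod.val k, h⟩ else 0

/-- Circular convolution of two signals on `ZMod n`. -/
def cconv {n : ℕ} [NeZero n] (f g : ZMod n → ℝ) : ZMod n → ℝ :=
  fun k => ∑ l : ZMod n, f l * g (k - l)

/-- Index flip of a signal on `ZMod n`. -/
def cflip {n : ℕ} (g : ZMod n → ℝ) : ZMod n → ℝ := fun k => g (-k)

/-- Wrap-around Hankel matrix `H_d(f)` of `f : ZMod n → ℝ`. -/
def hankel {n : ℕ} (d : ℕ) (f : ZMod n → ℝ) : Matrix (ZMod n) (Fin d) ℝ :=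
  Matrix.of fun i j => f (i + ((j : ℕ) : ZMod n))

/-- Frobenius (trace) inner product of two matrices. -/
def frobInner {I J : Type*} [Fintype I] [Fintype J] (A B : Matrix I J ℝ) : ℝ :=
  ∑ i, ∑ j, A i j * B i j

/-- Orthonormal Hankel basis element `E_k = (1/√d) H_d(e_k)`. -/
def hankE {n : ℕ} [NeZero n] (d : ℕ) (k : ZMod n) : Matrix (ZMod n) (Fin d) ℝ :=
  (Real.sqrt d)⁻¹ • hankel d (Pi.single k 1)

/-- Generalized (left) inverse of the Hankel lifting. -/
def hdag {n d : ℕ} [NeZero n] (B : Matrix (ZMod n) (Fin d) ℝ) : ZMod n → ℝ :=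
  fun k => (Real.sqrt d)⁻¹ * frobInner (hankE d k) B

/-- Extended Hankel matrix `H_{d|p}(Z)` of a `p`-channel signal. -/
def hankelExt {n : ℕ} (d p : ℕ) (Z : Matrix (ZMod n) (Fin p) ℝ) :
    Matrix (ZMod n) (Fin p × Fin d) ℝ :=
  Matrix.of fun i cj => Z (i + ((cj.2 : ℕ) : ZMod n)) cj.1

/-- Generalized (left) inverse of the extended Hankel lifting. -/
def hdagExt {n d p : ℕ} [NeZero n] (Y : Matrix (ZMod n) (Fin p × Fin d) ℝ) :
    Matrix (ZMod n) (Fin p) ℝ :=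
  Matrix.of fun k c => hdag (Matrix.of fun i j => Y i (c, j)) k

/-- Entrywise ReLU on matrices. -/
def reluM {I J : Type*} (A : Matrix I J ℝ) : Matrix I J ℝ :=
  Matrix.of fun i j => max 0 (A i j)

/-! A rank-`r` lifting `H` is reproduced by `H C Cᵀ` once the columns of `C` span its row space
orthonormally (which `m ≥ r` columns can do), and the ReLU passes `H C` through losslessly when
`C` is doubled to `Ψ = [C, -C]`, because `ρ(a) - ρ(-a) = a`. Orthonormality of `Φ` cancels it
against `Φᵀ`, and `H_{d|p}^†` is a left inverse of `H_{d|p}`. -/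

lemma sum_single_add_mul {G R : Type*} [AddGroup G] [Fintype G] [DecidableEq G]
    [NonAssocSemiring R] (k a : G) (f : G → R) :
    ∑ i, (Pi.single k 1 : G → R) (i + a) * f (i + a) = f k :=
  (Equiv.sum_comp (Equiv.addRight a) fun i => (Pi.single k 1 : G → R) i * f i).trans
    (by simp [Pi.single_apply])

section LeftInverse

variable {n d : ℕ} [NeZero n]

lemma hdag_hankel (hd : 0 < d) (f : ZMod n → ℝ) : hdag (hankel d f) = f := by
  ext k
  have hinner : frobInner (hankE d k) (hankel d f) = (Real.sqrt d)⁻¹ * (d * f k) := by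
    simp only [frobInner, hankE, hankel, Matrix.smul_apply, of_apply, smul_eq_mul, mul_assoc,
      ← Finset.mul_sum]
    rw [Finset.sum_comm]
    simp [sum_single_add_mul]
  have hd' : (d : ℝ) ≠ 0 := by exact_mod_cast hd.ne'
  rw [hdag, hinner, ← mul_assoc, ← mul_inv, Real.mul_self_sqrt d.cast_nonneg,
    inv_mul_cancel_left₀ hd']

lemma hdagExt_hankelExt {p : ℕ} (hd : 0 < d) (X : Matrix (ZMod n) (Fin p) ℝ) :
    hdagExt (hankelExt d p X) = X := by
  ext k c
  exact congrFun (hdag_hankel hd fun i => X i c) k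

end LeftInverse

section ReLU

variable {I J L L' : Type*}

lemma reluM_sub_reluM_neg (A : Matrix I J ℝ) : reluM A - reluM (-A) = A := by
  ext i j
  simp [reluM, max_comm]

lemma reluM_fromCols (A : Matrix I J ℝ) (B : Matrix I L ℝ) :
    reluM (fromCols A B) = fromCols (reluM A) (reluM B) := by
  ext i (j | j) <;> rfl

lemma reluM_submatrix (A : Matrix I L ℝ) (e : L' → L) :
    reluM (A.submatrix id e) = (reluM A).submatrix id e :=
  rfl

lemma reluM_mul_fromCols_neg_mul_transpose {K : Type*} [Fintype J] [Fintype L] (N : Matrix K J ℝ)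
    (C D : Matrix J L ℝ) :
    reluM (N * fromCols C (-C)) * (fromCols D (-D))ᵀ = N * C * Dᵀ := by
  rw [mul_fromCols, transpose_fromCols, reluM_fromCols, fromCols_mul_fromRows, Matrix.mul_neg,
    transpose_neg, Matrix.mul_neg, ← sub_eq_add_neg, ← Matrix.sub_mul, reluM_sub_reluM_neg]

lemma reluM_mul_submatrix_mul_transpose_submatrix {K : Type*} [Fintype J] [Fintype L]
    [Fintype L'] (N : Matrix K J ℝ) (P Q : Matrix J L ℝ) (e : L' ≃ L) :
    reluM (N * P.submatrix id e) * (Q.submatrix id e)ᵀ = reluM (N * P) * Qᵀ := by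
  have hN : N * P.submatrix id e = (N * P).submatrix id e :=
    submatrix_mul_equiv N P id (Equiv.refl J) e
  rw [hN, reluM_submatrix, transpose_submatrix, submatrix_mul_equiv _ _ id e id, submatrix_id_id]

end ReLU

lemma Submodule.exists_sum_inner_smul_eq_of_finrank_le {𝕜 E : Type*} [RCLike 𝕜]
    [NormedAddCommGroup E] [InnerProductSpace 𝕜 E] (V : Submodule 𝕜 E) [FiniteDimensional 𝕜 V]
    {m : ℕ} (hm : Module.finrank 𝕜 V ≤ m) :
    ∃ c : Fin m → E, ∀ v ∈ V, ∑ j, inner 𝕜 (c j) v • c j = v := by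
  let b := stdOrthonormalBasis 𝕜 V
  let c : Fin m → E := Function.extend (Fin.castLE hm) (fun i => (b i : E)) 0
  have hc : ∀ i, c (Fin.castLE hm i) = b i := (Fin.castLE_injective hm).extend_apply _ _
  refine ⟨c, fun v hv => ?_⟩
  calc ∑ j, inner 𝕜 (c j) v • c j = ∑ i, inner 𝕜 (b i : E) v • (b i : E) := by
        refine (Fintype.sum_of_injective _ (Fin.castLE_injective hm) _ _ (fun j hj => ?_)
          fun i => by rw [hc]).symm
        simp [c, Function.extend_apply' _ _ _ hj]
    _ = v := by
        simpa [Submodule.coe_inner] using congrArg Subtype.val (b.sum_repr' ⟨v, hv⟩)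

lemma Matrix.exists_mul_mul_conjTranspose_eq_self_of_rank_le {𝕜 K ι : Type*} [RCLike 𝕜]
    [Finite K] [Fintype ι] (A : Matrix K ι 𝕜) {m : ℕ} (hA : A.rank ≤ m) :
    ∃ C : Matrix ι (Fin m) 𝕜, A * C * Cᴴ = A := by
  let rows : Submodule 𝕜 (EuclideanSpace 𝕜 ι) :=
    (Submodule.span 𝕜 (Set.range A.row)).map
      ((WithLp.linearEquiv 2 𝕜 (ι → 𝕜)).symm : (ι → 𝕜) →ₗ[𝕜] EuclideanSpace 𝕜 ι)
  have hrows : Module.finrank 𝕜 rows ≤ m := by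
    rwa [LinearEquiv.finrank_map_eq, ← rank_eq_finrank_span_row]
  obtain ⟨c, hc⟩ := rows.exists_sum_inner_smul_eq_of_finrank_le hrows
  refine ⟨of fun x j => star (c j x), ?_⟩
  ext k x
  have hrow := congrArg (· x) <| hc (WithLp.toLp 2 (A k))
    (Submodule.mem_map_of_mem (Submodule.subset_span (Set.mem_range_self k)))
  simp only [PiLp.inner_apply, RCLike.inner_apply, WithLp.ofLp_sum, WithLp.ofLp_smul,
    Finset.sum_apply, Pi.smul_apply, smul_eq_mul] at hrow
  simpa [mul_apply, mul_comm] using hrow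

theorem lowrank_approx_insufficient_channels_general {n d p m r : ℕ} [NeZero n] (hd : 0 < d)
    (X : Matrix (ZMod n) (Fin p) ℝ) (hr : (hankelExt d p X).rank = r)
    (Phi : Matrix (ZMod n) (ZMod n) ℝ) (hPhi : Phi * Phiᵀ = 1)
    (hrm : r ≤ m) :
    ∃ Psi Psit : Matrix (Fin p × Fin d) (Fin (2 * m)) ℝ,
      X = hdagExt (Phi * reluM (Phiᵀ * hankelExt d p X * Psi) * Psitᵀ) := by
  set H := hankelExt d p X
  obtain ⟨C, hC⟩ := H.exists_mul_mul_conjTranspose_eq_self_of_rank_le (hr.trans_le hrm)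
  rw [conjTranspose_eq_transpose_of_trivial] at hC
  let e : Fin (2 * m) ≃ Fin m ⊕ Fin m := (finCongr (two_mul m)).trans finSumFinEquiv.symm
  refine ⟨(fromCols C (-C)).submatrix id e, (fromCols C (-C)).submatrix id e, ?_⟩
  calc X = hdagExt H := (hdagExt_hankelExt hd X).symm
    _ = hdagExt (Phi * Phiᵀ * (H * C * Cᵀ)) := by rw [hPhi, Matrix.one_mul, hC]
    _ = _ := by
      rw [Matrix.mul_assoc Phi (reluM _), reluM_mul_submatrix_mul_transpose_submatrix,
        reluM_mul_fromCols_neg_mul_transpose]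
      simp only [Matrix.mul_assoc]

/-- low-rank approximation with insufficient channels: if
`rank H_{d|p}(X) = r`, `Φ` orthonormal, and `r ≤ m < pd`, then there exist
`Ψ, Ψ̃ ∈ ℝ^{pd×2m}` with `X = H_{d|p}^†(Φ ρ(Φᵀ H_{d|p}(X) Ψ) Ψ̃ᵀ)`. -/
theorem lowrank_approx_insufficient_channels {n d p m r : ℕ} [NeZero n] (hd : 0 < d)
    (X : Matrix (ZMod n) (Fin p) ℝ) (hr : (hankelExt d p X).rank = r)
    (Phi : Matrix (ZMod n) (ZMod n) ℝ) (hPhi : Phi * Phiᵀ = 1)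
    (hrm : r ≤ m) (hmpd : m < p * d) :
    ∃ Psi Psit : Matrix (Fin p × Fin d) (Fin (2 * m)) ℝ,
      X = hdagExt (Phi * reluM (Phiᵀ * hankelExt d p X * Psi) * Psitᵀ) :=
  lowrank_approx_insufficient_channels_general hd X hr Phi hPhi hrm
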